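/- arXiv:2303.11939 — 2 statements merged into one kernel-verified Lean document; each statement's English description precedes it below -/
import Mathlib

section
/- For any $a > 0$, there exist constants $c_1, c_2 > 0$ (depending on $a$) such that $\sum_{n=0}^{\infty} \frac{x^n}{(n!)^a} \ge c_1 \exp\big(c_2\, x^{1/a}\big)$ for all $x > 0$. -/
open Real

lemma exists_big_term (y : ℝ) :
    ∃ n : ℕ, Real.exp (y / 2) / 4 ≤ y ^ n / (Nat.factorial n : ℝ) := by
  by_contra h
  push_neg at h
  have hexp : Real.exp (y / 2) = ∑' n : ℕ, (y / 2) ^ n / (Nat.factorial n : ℝ) := by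
    rw [Real.exp_eq_exp_ℝ, NormedSpace.exp_eq_tsum_div]
  have hle : ∀ n : ℕ, (y / 2) ^ n / (Nat.factorial n : ℝ) ≤
      (1 / 2 : ℝ) ^ n * (Real.exp (y / 2) / 4) := by
    intro n
    have : (y / 2) ^ n / (Nat.factorial n : ℝ) =
        (1 / 2 : ℝ) ^ n * (y ^ n / (Nat.factorial n : ℝ)) := by
      rw [div_pow]
      rw [one_div, inv_pow]; ring
    rw [this]
    exact mul_le_mul_of_nonneg_left (h n).le (by positivity)
  have hs1 : Summable (fun n : ℕ => (y / 2) ^ n / (Nat.factorial n : ℝ)) :=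
    Real.summable_pow_div_factorial _
  have hs2 : Summable (fun n : ℕ => (1 / 2 : ℝ) ^ n * (Real.exp (y / 2) / 4)) :=
    (summable_geometric_of_lt_one (by norm_num) (by norm_num)).mul_right _
  have := Summable.tsum_le_tsum hle hs1 hs2
  rw [← hexp, tsum_mul_right, tsum_geometric_of_lt_one (by norm_num) (by norm_num)] at this
  norm_num at this
  nlinarith [Real.exp_pos (y / 2)]

lemma summable_aux (a : ℝ) (ha : 0 < a) (x : ℝ) (hx : 0 < x) :
    Summable (fun n : ℕ => x ^ n / (Nat.factorial n : ℝ) ^ a) := by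
  apply summable_of_ratio_test_tendsto_lt_one (l := 0) one_pos
  · filter_upwards with n
    have : (0:ℝ) < (Nat.factorial n : ℝ) ^ a := by
      apply Real.rpow_pos_of_pos
      exact_mod_cast (Nat.factorial_pos n)
    positivity
  · have key : ∀ n : ℕ, ‖x ^ (n+1) / (Nat.factorial (n+1) : ℝ) ^ a‖ /
        ‖x ^ n / (Nat.factorial n : ℝ) ^ a‖ = x * (((n:ℝ) + 1) ^ a)⁻¹ := by
      intro n
      have hf : (0:ℝ) < (Nat.factorial n : ℝ) := by exact_mod_cast Nat.factorial_pos n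
      have hfa : (0:ℝ) < (Nat.factorial n : ℝ) ^ a := Real.rpow_pos_of_pos hf a
      have hn1 : (0:ℝ) < (n:ℝ) + 1 := by positivity
      have hfact : ((Nat.factorial (n+1) : ℝ)) ^ a = ((n:ℝ)+1) ^ a * (Nat.factorial n : ℝ) ^ a := by
        rw [Nat.factorial_succ, Nat.cast_mul, Real.mul_rpow (by positivity) hf.le]
        push_cast
        ring_nf
      rw [Real.norm_eq_abs, Real.norm_eq_abs, abs_div, abs_div, abs_pow, abs_pow,
        abs_of_pos hx, abs_of_pos hfa, abs_of_pos (Real.rpow_pos_of_pos (by exact_mod_cast Nat.factorial_pos (n+1)) a),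
        hfact]
      field_simp
      ring
    simp only [key]
    have : Filter.Tendsto (fun n : ℕ => (((n:ℝ) + 1) ^ a)⁻¹) Filter.atTop (nhds 0) := by
      apply Filter.Tendsto.inv_tendsto_atTop
      apply (tendsto_rpow_atTop ha).comp
      exact Filter.tendsto_atTop_add_const_right _ 1 tendsto_natCast_atTop_atTop
    have := this.const_mul x
    simpa using this

/-- For `a > 0` there exist `c₁, c₂ > 0` with
`∑ₙ xⁿ/(n!)^a ≥ c₁ exp(c₂ x^{1/a})` for all `x > 0`. -/
theorem tsum_pow_div_factorial_rpow_lower (a : ℝ) (ha : 0 < a) :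
    ∃ c₁ c₂ : ℝ, 0 < c₁ ∧ 0 < c₂ ∧ ∀ x : ℝ, 0 < x →
      c₁ * Real.exp (c₂ * x ^ (1/a)) ≤ ∑' n : ℕ, x ^ n / (Nat.factorial n : ℝ) ^ a := by
  refine ⟨(1/4 : ℝ) ^ a, a / 2, Real.rpow_pos_of_pos (by norm_num) a, by positivity, ?_⟩
  intro x hx
  set y := x ^ (1/a) with hy
  have hy0 : 0 < y := Real.rpow_pos_of_pos hx _
  have hxy : y ^ (a : ℝ) = x := by
    rw [hy, one_div, Real.rpow_inv_rpow hx.le ha.ne']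
  obtain ⟨n, hn⟩ := exists_big_term y
  have hterm : x ^ n / (Nat.factorial n : ℝ) ^ a = (y ^ n / (Nat.factorial n : ℝ)) ^ a := by
    have hf : (0:ℝ) < (Nat.factorial n : ℝ) := by exact_mod_cast Nat.factorial_pos n
    rw [Real.div_rpow (by positivity) hf.le, ← hxy, ← Real.rpow_natCast (y ^ (a:ℝ)) n,
      ← Real.rpow_mul hy0.le, ← Real.rpow_natCast y n, ← Real.rpow_mul hy0.le, mul_comm]
  have hle1 : (1/4 : ℝ) ^ a * Real.exp (a / 2 * y) ≤ (y ^ n / (Nat.factorial n : ℝ)) ^ a := by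
    have h1 : ((Real.exp (y / 2) / 4 : ℝ)) ^ a ≤ (y ^ n / (Nat.factorial n : ℝ)) ^ a :=
      Real.rpow_le_rpow (by positivity) hn ha.le
    have h2 : ((Real.exp (y / 2) / 4 : ℝ)) ^ a = (1/4 : ℝ) ^ a * Real.exp (a / 2 * y) := by
      rw [div_eq_mul_one_div (Real.exp (y/2)) 4, Real.mul_rpow (Real.exp_pos _).le (by norm_num),
        ← Real.exp_mul]
      ring_nf
    rw [← h2]; exact h1
  calc (1/4 : ℝ) ^ a * Real.exp (a / 2 * y) ≤ x ^ n / (Nat.factorial n : ℝ) ^ a := by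
        rw [hterm]; exact hle1
    _ ≤ ∑' m : ℕ, x ^ m / (Nat.factorial m : ℝ) ^ a := by
        apply Summable.le_tsum (summable_aux a ha x hx) n
        intro m _
        have : (0:ℝ) < (Nat.factorial m : ℝ) ^ a :=
          Real.rpow_pos_of_pos (by exact_mod_cast Nat.factorial_pos m) a
        positivity
end

section
/- Let $n \ge 1$, $H \in (0, 1/2)$, and $\eta_0 = 0$. For all real $\eta_1, \dots, \eta_n$, $\prod_{j=1}^{n} |\eta_j - \eta_{j-1}|^{1-2H} \le \sum_{a \in \mathcal{D}_n} \prod_{j=1}^{n} |\eta_j|^{a_j}$, where $\mathcal{D}_n$ is the set of multi-indices $a = (a_1, \dots, a_n)$ with $\sum_{j=1}^n a_j = n(1-2H)$, $a_1 \in \{1-2H, 2(1-2H)\}$, $a_j \in \{0, 1-2H, 2(1-2H)\}$ for $2 \le j \le n-1$, and $a_n \in \{0, 1-2H\}$, and $\mathcal{D}_n$ has cardinality $2^{n-1}$. -/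
/-- The multi-index of exponents arising in the expansion of
`∏ⱼ |ηⱼ - η_{j-1}|^{1-2H}`, indexed by subsets `J ⊆ {2,…,n}`:
`a_j = (1-2H) · (1_{j=1} + 1_{j+1 ∈ J} + 1_{j ∈ {2,…,n} \ J})`. -/
noncomputable def multiIdx (H : ℝ) (n : ℕ) (J : Finset ℕ) (j : ℕ) : ℝ :=
  (1 - 2*H) * (((if j = 1 then 1 else 0) : ℝ) + (if j + 1 ∈ J then 1 else 0)
    + (if j ∈ Finset.Icc 2 n \ J then 1 else 0))

private lemma add_rpow_le' {a b p : ℝ} (ha : 0 ≤ a) (hb : 0 ≤ b) (hp : 0 ≤ p)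
    (hp1 : p ≤ 1) : (a + b) ^ p ≤ a ^ p + b ^ p := by
  lift a to NNReal using ha
  lift b to NNReal using hb
  have := NNReal.rpow_add_le_add_rpow a b hp hp1
  rw [← NNReal.coe_add, ← NNReal.coe_rpow, ← NNReal.coe_rpow, ← NNReal.coe_rpow,
    ← NNReal.coe_add, NNReal.coe_le_coe]
  exact this

private lemma abs_sub_rpow_le' {p : ℝ} (hp : 0 ≤ p) (hp1 : p ≤ 1) (x y : ℝ) :
    |x - y| ^ p ≤ |x| ^ p + |y| ^ p := by
  calc |x - y| ^ p ≤ (|x| + |y|) ^ p := by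
        apply Real.rpow_le_rpow (abs_nonneg _) _ hp
        calc |x - y| = |x + (-y)| := by ring_nf
          _ ≤ |x| + |(-y)| := abs_add_le _ _
          _ = |x| + |y| := by rw [abs_neg]
    _ ≤ |x| ^ p + |y| ^ p := add_rpow_le' (abs_nonneg _) (abs_nonneg _) hp hp1

/-- With `η₀ = 0` and `p = 1 - 2H ∈ (0,1)`,
`∏_{j=1}^n |ηⱼ - η_{j-1}|^p ≤ ∑_{a ∈ 𝒟ₙ} ∏_{j=1}^n |ηⱼ|^{a_j}`, where `𝒟ₙ` is the
family of multi-indices indexed by the `2^{n-1}` subsets of `{2,…,n}`; each such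
multi-index has total sum `n(1-2H)`, with `a₁ ∈ {1-2H, 2(1-2H)}`,
`a_j ∈ {0, 1-2H, 2(1-2H)}` in between, and `a_n ∈ {0, 1-2H}`. -/
theorem prod_abs_sub_rpow_le_sum (n : ℕ) (hn : 1 ≤ n) (H : ℝ) (hH0 : 0 < H) (hH : H < 1/2)
    (η : ℕ → ℝ) (hη0 : η 0 = 0) :
    ((∏ j ∈ Finset.Icc 1 n, |η j - η (j-1)| ^ (1 - 2*H))
        ≤ ∑ J ∈ (Finset.Icc 2 n).powerset,
            ∏ j ∈ Finset.Icc 1 n, |η j| ^ multiIdx H n J j)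
    ∧ (Finset.Icc 2 n).powerset.card = 2 ^ (n - 1)
    ∧ ∀ J ∈ (Finset.Icc 2 n).powerset,
        (∑ j ∈ Finset.Icc 1 n, multiIdx H n J j) = n * (1 - 2*H)
        ∧ multiIdx H n J 1 ∈ ({1 - 2*H, 2*(1 - 2*H)} : Set ℝ)
        ∧ multiIdx H n J n ∈ ({0, 1 - 2*H} : Set ℝ)
        ∧ ∀ j ∈ Finset.Icc 1 n, multiIdx H n J j ∈ ({0, 1 - 2*H, 2*(1 - 2*H)} : Set ℝ) := by
  have hp0 : (0:ℝ) ≤ 1 - 2*H := by linarith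
  have hp1 : (1:ℝ) - 2*H ≤ 1 := by linarith
  set p : ℝ := 1 - 2*H with hp_def
  set b : ℕ → ℝ := fun j => |η j| ^ p with hb_def
  have hbnn : ∀ j, 0 ≤ b j := fun j => Real.rpow_nonneg (abs_nonneg _) _
  have hsub : Finset.Icc 2 n ⊆ Finset.Icc 1 n := Finset.Icc_subset_Icc_left (by omega)
  have hone : (1:ℕ) ∈ Finset.Icc 1 n := by simp [hn]
  have honen : (1:ℕ) ∉ Finset.Icc 2 n := by simp
  have hsplit : Finset.Icc 1 n = insert 1 (Finset.Icc 2 n) := by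
    ext j
    simp only [Finset.mem_Icc, Finset.mem_insert]
    omega
  -- the nat-valued multiplicity
  have hk : ∀ (J : Finset ℕ) (j : ℕ), multiIdx H n J j
      = p * (((if j = 1 then 1 else 0) + (if j + 1 ∈ J then 1 else 0)
        + (if j ∈ Finset.Icc 2 n \ J then 1 else 0) : ℕ) : ℝ) := by
    intro J j
    simp only [multiIdx, ← hp_def]
    push_cast [apply_ite (Nat.cast : ℕ → ℝ)]
    ring
  -- key product identity for each `J ⊆ Icc 2 n`
  have hmain : ∀ J ∈ (Finset.Icc 2 n).powerset,
      (∏ j ∈ Finset.Icc 1 n, |η j| ^ multiIdx H n J j)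
        = b 1 * ((∏ i ∈ J, b (i - 1)) * ∏ j ∈ Finset.Icc 2 n \ J, b j) := by
    intro J hJ
    rw [Finset.mem_powerset] at hJ
    have hJ' : ∀ i ∈ J, 2 ≤ i ∧ i ≤ n := by
      intro i hi; have := hJ hi; simpa [Finset.mem_Icc] using this
    have step1 : ∀ j, |η j| ^ multiIdx H n J j
        = (b j) ^ (if j = 1 then 1 else 0) * (b j) ^ (if j + 1 ∈ J then 1 else 0)
          * (b j) ^ (if j ∈ Finset.Icc 2 n \ J then 1 else 0) := by
      intro j
      rw [hk, Real.rpow_mul (abs_nonneg _), Real.rpow_natCast, pow_add, pow_add]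
    have hA : (∏ j ∈ Finset.Icc 1 n, (b j) ^ (if j = 1 then 1 else 0)) = b 1 := by
      have h1 : ∀ j ∈ Finset.Icc 1 n,
          (b j) ^ (if j = 1 then 1 else 0) = if j = 1 then b j else 1 := by
        intro j _; split <;> simp
      rw [Finset.prod_congr rfl h1, Finset.prod_ite_eq' (Finset.Icc 1 n) 1 b, if_pos hone]
    have hB : (∏ j ∈ Finset.Icc 1 n, (b j) ^ (if j + 1 ∈ J then 1 else 0))
        = ∏ i ∈ J, b (i - 1) := by
      have h1 : ∀ j ∈ Finset.Icc 1 n,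
          (b j) ^ (if j + 1 ∈ J then 1 else 0) = if j + 1 ∈ J then b j else 1 := by
        intro j _; split <;> simp
      rw [Finset.prod_congr rfl h1, ← Finset.prod_filter]
      refine Finset.prod_bij (fun j _ => j + 1) ?_ ?_ ?_ ?_
      · intro j hj; exact (Finset.mem_filter.mp hj).2
      · intro j₁ _ j₂ _ h; exact Nat.add_right_cancel h
      · intro i hi
        have h2 := hJ' i hi
        refine ⟨i - 1, ?_, show i - 1 + 1 = i by omega⟩
        rw [Finset.mem_filter, Finset.mem_Icc]
        refine ⟨⟨by omega, by omega⟩, ?_⟩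
        rwa [show i - 1 + 1 = i by omega]
      · intro j _; show b j = b (j + 1 - 1); congr 1
    have hC : (∏ j ∈ Finset.Icc 1 n, (b j) ^ (if j ∈ Finset.Icc 2 n \ J then 1 else 0))
        = ∏ j ∈ Finset.Icc 2 n \ J, b j := by
      have h1 : ∀ j ∈ Finset.Icc 1 n,
          (b j) ^ (if j ∈ Finset.Icc 2 n \ J then 1 else 0)
            = if j ∈ Finset.Icc 2 n \ J then b j else 1 := by
        intro j _; split <;> simp
      rw [Finset.prod_congr rfl h1, ← Finset.prod_filter, Finset.filter_mem_eq_inter,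
        Finset.inter_eq_right.mpr ((Finset.sdiff_subset).trans hsub)]
    calc (∏ j ∈ Finset.Icc 1 n, |η j| ^ multiIdx H n J j)
        = (∏ j ∈ Finset.Icc 1 n, (b j) ^ (if j = 1 then 1 else 0))
          * (∏ j ∈ Finset.Icc 1 n, (b j) ^ (if j + 1 ∈ J then 1 else 0))
          * (∏ j ∈ Finset.Icc 1 n, (b j) ^ (if j ∈ Finset.Icc 2 n \ J then 1 else 0)) := by
          rw [← Finset.prod_mul_distrib, ← Finset.prod_mul_distrib]
          exact Finset.prod_congr rfl fun j _ => step1 j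
      _ = b 1 * ((∏ i ∈ J, b (i - 1)) * ∏ j ∈ Finset.Icc 2 n \ J, b j) := by
          rw [hA, hB, hC, mul_assoc]
  refine ⟨?_, ?_, ?_⟩
  · -- the inequality
    calc (∏ j ∈ Finset.Icc 1 n, |η j - η (j-1)| ^ p)
        = b 1 * ∏ j ∈ Finset.Icc 2 n, |η j - η (j-1)| ^ p := by
          rw [hsplit, Finset.prod_insert honen]
          simp [hb_def, hη0]
      _ ≤ b 1 * ∏ j ∈ Finset.Icc 2 n, (b (j-1) + b j) := by
          apply mul_le_mul_of_nonneg_left _ (hbnn 1)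
          apply Finset.prod_le_prod
          · intro j _; exact Real.rpow_nonneg (abs_nonneg _) _
          · intro j _
            have := abs_sub_rpow_le' hp0 hp1 (η (j-1)) (η j)
            calc |η j - η (j-1)| ^ p = |η (j-1) - η j| ^ p := by rw [abs_sub_comm]
              _ ≤ |η (j-1)| ^ p + |η j| ^ p := this
              _ = b (j-1) + b j := rfl
      _ = b 1 * ∑ J ∈ (Finset.Icc 2 n).powerset,
            (∏ i ∈ J, b (i-1)) * ∏ j ∈ Finset.Icc 2 n \ J, b j := by
          rw [Finset.prod_add]
      _ = ∑ J ∈ (Finset.Icc 2 n).powerset,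
            b 1 * ((∏ i ∈ J, b (i-1)) * ∏ j ∈ Finset.Icc 2 n \ J, b j) := by
          rw [Finset.mul_sum]
      _ = ∑ J ∈ (Finset.Icc 2 n).powerset,
            ∏ j ∈ Finset.Icc 1 n, |η j| ^ multiIdx H n J j := by
          refine Finset.sum_congr rfl fun J hJ => ?_
          rw [hmain J hJ]
  · -- cardinality
    rw [Finset.card_powerset, Nat.card_Icc, show n + 1 - 2 = n - 1 by omega]
  · -- properties of the multi-index
    intro J hJ
    rw [Finset.mem_powerset] at hJ
    have hJ' : ∀ i ∈ J, 2 ≤ i ∧ i ≤ n := by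
      intro i hi; have := hJ hi; simpa [Finset.mem_Icc] using this
    have hcard2 : (Finset.Icc 2 n).card = n - 1 := by rw [Nat.card_Icc]; omega
    have hcardJ : J.card ≤ n - 1 := hcard2 ▸ Finset.card_le_card hJ
    refine ⟨?_, ?_, ?_, ?_⟩
    · -- total sum
      have hsum : (∑ j ∈ Finset.Icc 1 n, ((if j = 1 then 1 else 0)
          + (if j + 1 ∈ J then 1 else 0)
          + (if j ∈ Finset.Icc 2 n \ J then 1 else 0) : ℕ)) = n := by
        rw [Finset.sum_add_distrib, Finset.sum_add_distrib]
        have e1 : (∑ j ∈ Finset.Icc 1 n, (if j = 1 then 1 else 0 : ℕ)) = 1 := by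
          rw [Finset.sum_ite_eq' (Finset.Icc 1 n) 1 (fun _ => (1:ℕ)), if_pos hone]
        have e2 : (∑ j ∈ Finset.Icc 1 n, (if j + 1 ∈ J then 1 else 0 : ℕ)) = J.card := by
          rw [← Finset.card_filter]
          refine Finset.card_bij (fun j _ => j + 1) ?_ ?_ ?_
          · intro j hj; exact (Finset.mem_filter.mp hj).2
          · intro j₁ _ j₂ _ h; exact Nat.add_right_cancel h
          · intro i hi
            have h2 := hJ' i hi
            refine ⟨i - 1, ?_, show i - 1 + 1 = i by omega⟩
            rw [Finset.mem_filter, Finset.mem_Icc]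
            refine ⟨⟨by omega, by omega⟩, ?_⟩
            rwa [show i - 1 + 1 = i by omega]
        have e3 : (∑ j ∈ Finset.Icc 1 n, (if j ∈ Finset.Icc 2 n \ J then 1 else 0 : ℕ))
            = (Finset.Icc 2 n \ J).card := by
          rw [← Finset.card_filter, Finset.filter_mem_eq_inter,
            Finset.inter_eq_right.mpr ((Finset.sdiff_subset).trans hsub)]
        rw [e1, e2, e3, Finset.card_sdiff_of_subset hJ, hcard2]
        omega
      calc (∑ j ∈ Finset.Icc 1 n, multiIdx H n J j)
          = ∑ j ∈ Finset.Icc 1 n, p * (((if j = 1 then 1 else 0)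
              + (if j + 1 ∈ J then 1 else 0)
              + (if j ∈ Finset.Icc 2 n \ J then 1 else 0) : ℕ) : ℝ) :=
            Finset.sum_congr rfl fun j _ => hk J j
        _ = p * ((∑ j ∈ Finset.Icc 1 n, ((if j = 1 then 1 else 0)
              + (if j + 1 ∈ J then 1 else 0)
              + (if j ∈ Finset.Icc 2 n \ J then 1 else 0) : ℕ) : ℕ) : ℝ) := by
            rw [← Finset.mul_sum, Nat.cast_sum]

        _ = n * (1 - 2*H) := by rw [hsum, hp_def]; ring
    · -- value at 1
      have h1 : (1:ℕ) ∉ Finset.Icc 2 n \ J := fun h => honen (Finset.mem_sdiff.mp h).1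
      simp only [Set.mem_insert_iff, Set.mem_singleton_iff]
      by_cases h2 : (2:ℕ) ∈ J
      · right
        simp [multiIdx, h2, h1]
        ring
      · left
        simp [multiIdx, h2, h1, hp_def]
    · -- value at n
      have hn1 : n + 1 ∉ J := fun h => by have := hJ' _ h; omega
      simp only [Set.mem_insert_iff, Set.mem_singleton_iff]
      rcases eq_or_lt_of_le hn with h | h
      · -- n = 1
        right
        have hnn : n ∉ Finset.Icc 2 n \ J := fun hc => by
          have := (Finset.mem_sdiff.mp hc).1
          rw [Finset.mem_Icc] at this; omega
        have h2 : (2:ℕ) ∉ J := fun hc => by have := hJ' _ hc; omega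
        simp [multiIdx, h.symm, hn1, hnn, h2, hp_def]
      · -- n ≥ 2
        have hne : n ≠ 1 := by omega
        by_cases hnJ : n ∈ J
        · left
          have hnn : n ∉ Finset.Icc 2 n \ J := fun hc => (Finset.mem_sdiff.mp hc).2 hnJ
          simp [multiIdx, hne, hn1, hnn]
        · right
          have hnn : n ∈ Finset.Icc 2 n \ J := by
            rw [Finset.mem_sdiff, Finset.mem_Icc]; exact ⟨⟨by omega, le_refl n⟩, hnJ⟩
          simp [multiIdx, hne, hn1, hnn, hp_def]
    · -- all values
      intro j hj
      simp only [Set.mem_insert_iff, Set.mem_singleton_iff]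
      by_cases hj1 : j = 1
      · subst hj1
        have h1 : (1:ℕ) ∉ Finset.Icc 2 n \ J := fun h => honen (Finset.mem_sdiff.mp h).1
        by_cases h2 : (1:ℕ) + 1 ∈ J
        · right; right
          simp [multiIdx, h2, h1]; ring
        · right; left
          simp [multiIdx, h2, h1, hp_def]
      · by_cases hA : j + 1 ∈ J <;> by_cases hB : j ∈ Finset.Icc 2 n \ J
        · right; right
          simp [multiIdx, hj1, hA, hB]; ring
        · right; left
          simp [multiIdx, hj1, hA, hB, hp_def]
        · right; left
          simp [multiIdx, hj1, hA, hB, hp_def]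
        · left
          simp [multiIdx, hj1, hA, hB]
end
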